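/- Let D > 0, let N be a positive integer, and set x_j = −1 + (2j−1)/N for j = 1,…,N. Define ∇_{x_k}G(x_k,x_j) = (sign(x_k − x_j) − x_k)/(2D) for j ≠ k, and ∇_{x_k}G(x_k,x_k) = −x_k/(2D) (the x-derivative of the regular part H(x,z) = (1/(2D))(−1/3 − x²/2 − z²/2) evaluated at x = z = x_k). Then for every k ∈ {1,…,N}, Σ_{j=1}^{N} ∇_{x_k}G(x_k, x_j) = 0. -/

import Mathlib

open Real Finset

/-!
Writing `∇_{x_k}G(x_k,x_k) = (sign 0 − x_k)/(2D)`, the `k`-th row sum is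
`(Σ_j sign(x_k − x_j) − N x_k)/(2D)`. Since the `x_j` increase with `j`, the signs contribute
`k − (N − 1 − k) = 2k + 1 − N` (zero-based `k`), while `N x_k = 2k + 1 − N` by the choice of the
spike positions.
-/

theorem Real.sign_sub_of_strictMono {α : Type*} [LinearOrder α] {f : α → ℝ} (hf : StrictMono f)
    (i j : α) :
    Real.sign (f i - f j) = (if j < i then 1 else 0) - (if i < j then 1 else 0) := by
  rcases lt_trichotomy j i with h | rfl | h
  · rw [sign_of_pos (sub_pos.2 (hf h)), if_pos h, if_neg h.not_gt, sub_zero]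
  · simp
  · rw [sign_of_neg (sub_neg.2 (hf h)), if_neg h.not_gt, if_pos h, zero_sub]

theorem Fin.sum_sign_sub_of_strictMono {N : ℕ} {f : Fin N → ℝ} (hf : StrictMono f) (k : Fin N) :
    ∑ j, Real.sign (f k - f j) = 2 * k + 1 - N := by
  simp only [Real.sign_sub_of_strictMono hf, sum_sub_distrib, sum_boole, filter_gt_eq_Iio,
    filter_lt_eq_Ioi, Fin.card_Iio, Fin.card_Ioi, Nat.sub_sub]
  rw [Nat.cast_sub (by omega : 1 + (k : ℕ) ≤ N)]
  push_cast
  ring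

theorem stmt_10 (D : ℝ) (N : ℕ)
    (x : Fin N → ℝ) (hx : ∀ j : Fin N, x j = -1 + (2 * (j : ℝ) + 1) / N) :
    ∀ k : Fin N,
      (∑ j : Fin N,
        if j = k then -(x k) / (2 * D)
        else (Real.sign (x k - x j) - x k) / (2 * D)) = 0 := by
  intro k
  have hN : (N : ℝ) ≠ 0 := by exact_mod_cast k.pos.ne'
  have hmono : StrictMono x := fun i j hij => by
    rw [hx, hx]
    gcongr
    exact_mod_cast hij
  have hsummand : ∀ j, (if j = k then -(x k) / (2 * D)
      else (Real.sign (x k - x j) - x k) / (2 * D)) = (Real.sign (x k - x j) - x k) / (2 * D) := by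
    intro j
    split_ifs with h
    · simp [h]
    · rfl
  rw [sum_congr rfl fun j _ => hsummand j, ← sum_div, sum_sub_distrib,
    Fin.sum_sign_sub_of_strictMono hmono, sum_const, card_univ, Fintype.card_fin, nsmul_eq_mul,
    hx k]
  field_simp
  ring
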